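/- arXiv:1509.06724 — 3 statements merged into one kernel-verified Lean document; each statement's English description precedes it below -/
import Mathlib

section
/- A finitely generated group has only finitely many subgroups of any given finite index k. -/
/-!
A subgroup `H` of index `k` is the stabilizer of the trivial coset for the action of `G` on
`G ⧸ H`; numbering the cosets by `Fin k`, `H` is determined by a homomorphism
`G →* Perm (Fin k)` together with a point of `Fin k`. A homomorphism out of a finitely
generated group is determined by its values on a finite generating set, so there are only
finitely many such pairs.
-/

open MulAction

theorem MonoidHom.finite_of_fg (M N : Type*) [Monoid M] [Monoid.FG M] [Monoid N] [Finite N] :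
    Finite (M →* N) := by
  obtain ⟨S, hS⟩ := Monoid.FG.fg_top (M := M)
  refine Finite.of_injective (fun φ : M →* N => fun s : S => φ s) fun φ ψ h => ?_
  exact MonoidHom.eq_of_eqOn_denseM hS fun s hs => congrFun h ⟨s, hs⟩

theorem Subgroup.exists_eq_comap_stabilizer_fin {G : Type*} [Group G] (H : Subgroup G)
    [H.FiniteIndex] :
    ∃ (φ : G →* Equiv.Perm (Fin H.index)) (i : Fin H.index),
      H = (stabilizer (Equiv.Perm (Fin H.index)) i).comap φ := by
  let e : G ⧸ H ≃ Fin H.index := Finite.equivFinOfCardEq rfl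
  refine ⟨e.permCongrHom.toMonoidHom.comp (toPermHom G (G ⧸ H)), e (1 : G), ?_⟩
  ext g
  simp [Equiv.permCongr_apply, QuotientGroup.eq]

/-- M. Hall's theorem: a finitely generated group has only finitely many
subgroups of any given finite index `k`. -/
theorem finitely_many_subgroups_of_index (G : Type*) [Group G] [Group.FG G]
    (k : ℕ) (hk : 0 < k) :
    {H : Subgroup G | H.index = k}.Finite := by
  have := MonoidHom.finite_of_fg G (Equiv.Perm (Fin k))
  refine (Set.finite_range fun p : (G →* Equiv.Perm (Fin k)) × Fin k =>
    (stabilizer (Equiv.Perm (Fin k)) p.2).comap p.1).subset ?_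
  rintro H (hH : H.index = k)
  have : H.FiniteIndex := ⟨hH ▸ hk.ne'⟩
  subst hH
  obtain ⟨φ, i, hφ⟩ := H.exists_eq_comap_stabilizer_fin
  exact ⟨(φ, i), hφ.symm⟩
end

section
/- Point-picking lemma: Let Σ be a compact surface with boundary in a Riemannian manifold and suppose ρ := sup_{x∈Σ} |A|(x)·min{1, d(x, ∂Σ)} is large. Then there exists a point p ∈ Σ and a radius R > 0 with λ := |A|(p) satisfying λ·R ≥ √ρ → ∞, d(p, ∂Σ) ≥ R, and sup_{x ∈ Σ ∩ B_R(p)} |A|(x)·d(x, ∂B_R(p)) = |A|(p)·R; consequently for x ∈ Σ ∩ B_R(p), |A|(x) ≤ λ·R/(R − d(x,p)). -/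
/-!
Maximize `A x · min 1 (d(x, ∂S))` over `S` at a point `q`, and put `r = min 1 (d(q, ∂S))`, so that
`A q · r ≥ ρ ≥ 1`. Then maximize `A x · (r - d(x, q))`, the curvature weighted by the distance to
`∂B_r(q)`, over `S ∩ B̄_r(q)` at a point `p`, and put `R = r - d(p, q)`. Since `B_R(p) ⊆ B̄_r(q)`
and `R - d(x, p) ≤ r - d(x, q)` there, `p` also maximizes `A x · (R - d(x, p))` on `S ∩ B_R(p)`,
while `A p · R ≥ A q · r ≥ ρ ≥ √ρ`, and `B_R(p)` stays inside `B_r(q)`, hence away from `∂S`.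
-/

open Metric

theorem biSup_le_of_isMaxOn {α : Type*} {f : α → ℝ} {S : Set α} {q : α}
    (hq : IsMaxOn f S q) (hfq : 0 ≤ f q) : ⨆ x ∈ S, f x ≤ f q :=
  Real.iSup_le (fun _ => Real.iSup_le (fun hx => hq hx) hfq) hfq

section PointPicking

variable {M : Type*} [PseudoMetricSpace M] {S : Set M} {A : M → ℝ}

theorem mul_sub_dist_le_of_isMaxOn {p q x : M} {r : ℝ} (hA0 : ∀ x ∈ S, 0 ≤ A x)
    (hp : IsMaxOn (fun x => A x * (r - dist x q)) (S ∩ closedBall q r) p)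
    (hx : x ∈ S ∩ ball p (r - dist p q)) :
    A x * (r - dist p q - dist x p) ≤ A p * (r - dist p q) := by
  obtain ⟨hxS, hxp⟩ := hx
  rw [mem_ball] at hxp
  have hxq : dist x q ≤ dist x p + dist p q := dist_triangle x p q
  have hxK : x ∈ S ∩ closedBall q r := ⟨hxS, mem_closedBall.2 (by linarith)⟩
  calc A x * (r - dist p q - dist x p)
      ≤ A x * (r - dist x q) := mul_le_mul_of_nonneg_left (by linarith) (hA0 x hxS)
    _ ≤ A p * (r - dist p q) := hp hxK

theorem exists_mul_sub_dist_le (hS : IsCompact S) (hA : ContinuousOn A S)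
    (hA0 : ∀ x ∈ S, 0 ≤ A x) {q : M} (hq : q ∈ S) {r : ℝ} (hr : 0 ≤ r) :
    ∃ p ∈ S, A q * r ≤ A p * (r - dist p q) ∧
      ∀ x ∈ S ∩ ball p (r - dist p q), A x * (r - dist p q - dist x p) ≤ A p * (r - dist p q) := by
  have hqK : q ∈ S ∩ closedBall q r := ⟨hq, mem_closedBall_self hr⟩
  obtain ⟨p, ⟨hpS, -⟩, hp⟩ := (hS.inter_right isClosed_closedBall).exists_isMaxOn ⟨q, hqK⟩
    ((hA.mono Set.inter_subset_left).mul (by fun_prop : Continuous fun x => r - dist x q).continuousOn)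
  refine ⟨p, hpS, ?_, fun x hx => mul_sub_dist_le_of_isMaxOn hA0 hp hx⟩
  simpa using hp hqK

end PointPicking

/-- Point-picking lemma. Let `S` be a compact surface with boundary `∂S` in a Riemannian
manifold (abstracted to a metric space), with second fundamental form norm `A`. If
`ρ := sup_{x∈S} A(x)·min{1, d(x,∂S)}` is large (`ρ ≥ 1`), then there exist `p ∈ S` and
`R > 0` with `λ := A(p)` satisfying `λ·R ≥ √ρ`, `d(p,∂S) ≥ R`, and
`sup_{x ∈ S ∩ B_R(p)} A(x)·d(x, ∂B_R(p)) = A(p)·R`; consequently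
`A(x) ≤ λ·R/(R − d(x,p))` on `S ∩ B_R(p)`. -/
theorem point_picking {M : Type*} [MetricSpace M] (S bdry : Set M)
    (hS : IsCompact S) (hne : S.Nonempty)
    (A : M → ℝ) (hA : ContinuousOn A S) (hA0 : ∀ x ∈ S, 0 ≤ A x)
    (ρ : ℝ) (hρ : ρ = ⨆ x ∈ S, A x * min 1 (infDist x bdry)) (hρ1 : 1 ≤ ρ) :
    ∃ p ∈ S, ∃ R > (0:ℝ),
      Real.sqrt ρ ≤ A p * R ∧
      R ≤ infDist p bdry ∧
      (∀ x ∈ S ∩ ball p R, A x * (R - dist x p) ≤ A p * R) ∧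
      (∀ x ∈ S ∩ ball p R, A x ≤ A p * R / (R - dist x p)) := by
  obtain ⟨q, hqS, hq⟩ := hS.exists_isMaxOn hne
    (hA.mul (by fun_prop : Continuous fun x => min 1 (infDist x bdry)).continuousOn)
  set r := min 1 (infDist q bdry)
  have hr0 : 0 ≤ r := le_min zero_le_one infDist_nonneg
  have hρq : ρ ≤ A q * r := hρ ▸ biSup_le_of_isMaxOn hq (mul_nonneg (hA0 q hqS) hr0)
  obtain ⟨p, hpS, hqp, hball⟩ := exists_mul_sub_dist_le hS hA hA0 hqS hr0
  set R := r - dist p q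
  have hR : 0 < R := pos_of_mul_pos_right (by linarith) (hA0 p hpS)
  refine ⟨p, hpS, R, hR, ?_, ?_, hball, fun x hx => ?_⟩
  · calc Real.sqrt ρ ≤ ρ := Real.sqrt_le_self_iff.2 (Or.inr hρ1)
      _ ≤ A p * R := hρq.trans hqp
  · linarith [infDist_le_infDist_add_dist (s := bdry) (x := q) (y := p),
      min_le_right 1 (infDist q bdry), dist_comm p q]
  · exact (le_div_iff₀ (sub_pos.2 (mem_ball.1 hx.2))).2 (hball x hx)
end

section
/- Abstract point-picking in a metric space: let (X,d) be a metric space, K ⊂ X compact, h : K → [0,∞) continuous, q ∈ K with h(q) > 0, and r > 0 with B_r(q) ⊂ K. Then there exists p ∈ B_r(q) ∩ K such that, with R := r − d(p,q) > 0, one has h(p)·R ≥ h(q)·r and h(x) ≤ h(p)·R/(R − d(x,p)) for all x ∈ K with d(x,p) < R. -/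
open Metric

section PointPicking

variable {X : Type*} [PseudoMetricSpace X] {h : X → ℝ} {p q : X} {r : ℝ}

lemma exists_isMaxOn_mul_sub_dist (hB : IsCompact (closedBall q r))
    (hc : ContinuousOn h (closedBall q r)) (hr : 0 ≤ r) :
    ∃ p ∈ closedBall q r, IsMaxOn (fun x => h x * (r - dist x q)) (closedBall q r) p :=
  hB.exists_isMaxOn ⟨q, mem_closedBall_self hr⟩
    (hc.mul (continuous_const.sub (continuous_id.dist continuous_const)).continuousOn)

variable (hmax : IsMaxOn (fun x => h x * (r - dist x q)) (closedBall q r) p)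
include hmax

lemma IsMaxOn.mul_le_mul_sub_dist (hr : 0 ≤ r) : h q * r ≤ h p * (r - dist p q) := by
  simpa using hmax (mem_closedBall_self hr)

lemma IsMaxOn.sub_dist_pos (hr : 0 < r) (hq0 : 0 < h q) (hp : 0 ≤ h p) :
    0 < r - dist p q :=
  pos_of_mul_pos_right ((mul_pos hq0 hr).trans_le (hmax.mul_le_mul_sub_dist hr.le)) hp

/-- The ball of radius `R = r - d(p,q)` about `p` lies in the ball of radius `r` about `q`,
and on it `R - d(x,p) ≤ r - d(x,q)`, so maximality of `p` bounds `h x`. -/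
lemma IsMaxOn.le_mul_sub_dist_div {x : X} (hx0 : 0 ≤ h x) (hx : dist x p < r - dist p q) :
    h x ≤ h p * (r - dist p q) / (r - dist p q - dist x p) := by
  have hxB : x ∈ closedBall q r :=
    ball_subset_closedBall (ball_subset_ball' (by linarith) (mem_ball.2 hx))
  rw [le_div_iff₀ (by linarith)]
  calc h x * (r - dist p q - dist x p) ≤ h x * (r - dist x q) :=
        mul_le_mul_of_nonneg_left (by linarith [dist_triangle x p q]) hx0
    _ ≤ h p * (r - dist p q) := hmax hxB

end PointPicking

theorem abstract_point_picking_general {X : Type*} [MetricSpace X] (K : Set X) (hK : IsCompact K)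
    (h : X → ℝ) (hc : ContinuousOn h K) (hnn : ∀ x ∈ K, 0 ≤ h x)
    (q : X) (hq0 : 0 < h q) (r : ℝ) (hr : 0 < r)
    (hball : closedBall q r ⊆ K) :
    ∃ p ∈ closedBall q r ∩ K, 0 < r - dist p q ∧
      h q * r ≤ h p * (r - dist p q) ∧
      ∀ x ∈ K, dist x p < r - dist p q →
        h x ≤ h p * (r - dist p q) / ((r - dist p q) - dist x p) := by
  obtain ⟨p, hpB, hmax⟩ := exists_isMaxOn_mul_sub_dist
    (hK.of_isClosed_subset isClosed_closedBall hball) (hc.mono hball) hr.le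
  have hpK : p ∈ K := hball hpB
  exact ⟨p, ⟨hpB, hpK⟩, hmax.sub_dist_pos hr hq0 (hnn p hpK), hmax.mul_le_mul_sub_dist hr.le,
    fun x hxK hx => hmax.le_mul_sub_dist_div (hnn x hxK) hx⟩

/-- Abstract point-picking in a metric space: let `K` be compact, `h : K → [0,∞)`
continuous, `q ∈ K` with `h(q) > 0`, and `r > 0` with `B_r(q) ⊆ K`. Then there is
`p ∈ B_r(q) ∩ K` such that, with `R := r − d(p,q) > 0`, one has `h(p)·R ≥ h(q)·r` and
`h(x) ≤ h(p)·R/(R − d(x,p))` for all `x ∈ K` with `d(x,p) < R`. -/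
theorem abstract_point_picking {X : Type*} [MetricSpace X] (K : Set X) (hK : IsCompact K)
    (h : X → ℝ) (hc : ContinuousOn h K) (hnn : ∀ x ∈ K, 0 ≤ h x)
    (q : X) (hq : q ∈ K) (hq0 : 0 < h q) (r : ℝ) (hr : 0 < r)
    (hball : closedBall q r ⊆ K) :
    ∃ p ∈ closedBall q r ∩ K, 0 < r - dist p q ∧
      h q * r ≤ h p * (r - dist p q) ∧
      ∀ x ∈ K, dist x p < r - dist p q →
        h x ≤ h p * (r - dist p q) / ((r - dist p q) - dist x p) :=
  abstract_point_picking_general K hK h hc hnn q hq0 r hr hball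
end
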